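/- The residue pairing ω on ℂ(q) is nondegenerate: for every nonzero rational function f ∈ ℂ(q) there exists g ∈ ℂ(q) such that Σ_{ζ root of unity} Res_ζ (σ(f)·g·q⁻¹) ≠ 0. -/

import Mathlib

open Polynomial

noncomputable section

/-- A complex number is a root of unity if some positive power of it equals `1`. -/
def IsRootOfUnity (ζ : ℂ) : Prop := ∃ n : ℕ, 0 < n ∧ ζ ^ n = 1

/-- The residue of a rational function `f ∈ ℂ(q)` at a point `ζ`: the coefficient of
`(q - ζ)⁻¹` in the Laurent expansion of `f` at `ζ`. -/
def residue (ζ : ℂ) (f : RatFunc ℂ) : ℂ :=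
  (RatFunc.liftAlgHom (Algebra.ofId ℂ[X] (LaurentSeries ℂ))
    (nonZeroDivisors_le_comap_nonZeroDivisors_of_injective _
      (Polynomial.algebraMap_hahnSeries_injective _)) (RatFunc.laurent ζ f)).coeff (-1 : ℤ)

/-- The residue pairing `ω(f, g) = Σ_{ζ root of unity} Res_ζ (σ(f) · g · q⁻¹)`. -/
def omegaPair (σ : RatFunc ℂ → RatFunc ℂ) (f g : RatFunc ℂ) : ℂ :=
  ∑ᶠ ζ ∈ {z : ℂ | IsRootOfUnity z}, residue ζ (σ f * g * (RatFunc.X : RatFunc ℂ)⁻¹)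

lemma LL_alg (p : ℂ[X]) : (RatFunc.liftAlgHom (Algebra.ofId ℂ[X] (LaurentSeries ℂ))
    (nonZeroDivisors_le_comap_nonZeroDivisors_of_injective _
      (Polynomial.algebraMap_hahnSeries_injective _))) (algebraMap ℂ[X] _ p) = algebraMap ℂ[X] (LaurentSeries ℂ) p := by
  have := RatFunc.liftAlgHom_apply_div (φ := Algebra.ofId ℂ[X] (LaurentSeries ℂ)) (hφ := (nonZeroDivisors_le_comap_nonZeroDivisors_of_injective _
      (Polynomial.algebraMap_hahnSeries_injective _))) p 1
  rw [map_one, map_one, div_one, div_one] at this; exact this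

lemma LL_X : (RatFunc.liftAlgHom (Algebra.ofId ℂ[X] (LaurentSeries ℂ))
    (nonZeroDivisors_le_comap_nonZeroDivisors_of_injective _
      (Polynomial.algebraMap_hahnSeries_injective _))) RatFunc.X = HahnSeries.single 1 1 := by
  rw [← RatFunc.algebraMap_X, LL_alg]; simp

lemma LL_C (ζ : ℂ) : (RatFunc.liftAlgHom (Algebra.ofId ℂ[X] (LaurentSeries ℂ))
    (nonZeroDivisors_le_comap_nonZeroDivisors_of_injective _
      (Polynomial.algebraMap_hahnSeries_injective _))) (RatFunc.C ζ) = HahnSeries.C ζ := by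
  rw [← RatFunc.algebraMap_C, LL_alg]; simp

lemma residue_key (ζ : ℂ) :
    residue ζ ((RatFunc.X - RatFunc.C 1)⁻¹) = if ζ = 1 then 1 else 0 := by
  unfold residue
  rw [map_inv₀, map_sub, RatFunc.laurent_X, RatFunc.laurent_C, map_inv₀, map_sub, map_add]
  rw [LL_X,
      LL_C ζ,
      LL_C 1]
  by_cases h : ζ = 1
  · subst h
    simp only [sub_self, add_sub_cancel_right, if_pos rfl]
    have hmul : (HahnSeries.single (-1 : ℤ) (1 : ℂ)) * HahnSeries.single (1 : ℤ) (1 : ℂ) = 1 := by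
      rw [HahnSeries.single_mul_single, neg_add_cancel, one_mul]
      rfl
    rw [inv_eq_of_mul_eq_one_left hmul, HahnSeries.coeff_single_same]
    simp
  · rw [if_neg h]
    set x : LaurentSeries ℂ := HahnSeries.single 1 1 + HahnSeries.C ζ - HahnSeries.C 1 with hx
    have hc0 : x.coeff 0 = ζ - 1 := by
      simp [hx, HahnSeries.C_apply, HahnSeries.coeff_single]
    have hne : x ≠ 0 := by
      intro h0
      rw [h0] at hc0
      simp at hc0
      exact h (by linear_combination -hc0)
    have hneg : ∀ n : ℤ, n < 0 → x.coeff n = 0 := by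
      intro n hn
      simp only [hx, HahnSeries.coeff_sub, HahnSeries.coeff_add, HahnSeries.C_apply,
        HahnSeries.coeff_single]
      rw [if_neg (by omega : ¬ n = 1), if_neg (by omega : ¬ n = 0), if_neg (by omega : ¬ n = 0)]
      ring
    have horder : x.order = 0 := by
      have hle : x.order ≤ 0 := HahnSeries.order_le_of_coeff_ne_zero (by rw [hc0]; exact sub_ne_zero.mpr h)
      have hge : 0 ≤ x.order := by
        by_contra hlt
        exact (mt HahnSeries.coeff_order_eq_zero.mp hne) (hneg _ (by omega))
      omega
    have hinvne : x⁻¹ ≠ 0 := inv_ne_zero hne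
    have horder' : x⁻¹.order = 0 := by
      have := HahnSeries.order_mul hne hinvne
      rw [mul_inv_cancel₀ hne, HahnSeries.order_one, horder] at this
      omega
    exact HahnSeries.coeff_eq_zero_of_lt_order (by rw [horder']; norm_num)

/-- The residue pairing `ω` on `ℂ(q)` is nondegenerate: every nonzero `f ∈ ℂ(q)` pairs
nontrivially with some `g ∈ ℂ(q)`. -/
theorem omega_nondegenerate (σ : RatFunc ℂ ≃ₐ[ℂ] RatFunc ℂ)
    (hσ : σ RatFunc.X = (RatFunc.X : RatFunc ℂ)⁻¹)
    (f : RatFunc ℂ) (hf : f ≠ 0) :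
    ∃ g : RatFunc ℂ, omegaPair σ f g ≠ 0 := by
  have hσf : σ f ≠ 0 := fun h => hf (by simpa using σ.injective (h.trans (map_zero σ).symm))
  have hX : (RatFunc.X : RatFunc ℂ) ≠ 0 := RatFunc.X_ne_zero
  refine ⟨RatFunc.X * (RatFunc.X - RatFunc.C 1)⁻¹ * (σ f)⁻¹, ?_⟩
  have hg : σ f * (RatFunc.X * (RatFunc.X - RatFunc.C 1)⁻¹ * (σ f)⁻¹) *
      (RatFunc.X : RatFunc ℂ)⁻¹ = (RatFunc.X - RatFunc.C 1)⁻¹ := by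
    have hX1 : (RatFunc.X - RatFunc.C 1 : RatFunc ℂ) ≠ 0 := by
      rw [show (RatFunc.X - RatFunc.C 1 : RatFunc ℂ) = algebraMap ℂ[X] _ (X - C 1) by
        rw [map_sub, RatFunc.algebraMap_X, RatFunc.algebraMap_C]]
      exact RatFunc.algebraMap_ne_zero (Polynomial.X_sub_C_ne_zero 1)
    rw [show σ f * (RatFunc.X * (RatFunc.X - RatFunc.C 1)⁻¹ * (σ f)⁻¹) *
        (RatFunc.X : RatFunc ℂ)⁻¹ = (σ f * (σ f)⁻¹) * (RatFunc.X * (RatFunc.X : RatFunc ℂ)⁻¹) *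
        (RatFunc.X - RatFunc.C 1)⁻¹ by ring,
      mul_inv_cancel₀ hσf, mul_inv_cancel₀ hX, one_mul, one_mul]
  unfold omegaPair
  rw [hg]
  simp only [residue_key]
  rw [finsum_mem_def, finsum_eq_single _ (1 : ℂ) ?_]
  · have h1 : (1 : ℂ) ∈ {z : ℂ | IsRootOfUnity z} := ⟨1, one_pos, one_pow 1⟩
    rw [Set.indicator_of_mem h1, if_pos rfl]
    exact one_ne_zero
  · intro x hx
    simp [Set.indicator_apply, hx]
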